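/- arXiv:1802.04779 — 4 statements merged into one kernel-verified Lean document; each statement's English description precedes it below -/
import Mathlib

section
/- Let u : ℝ → ℝ be differentiable, let x_0,…,x_n be distinct real points with u(x_0),…,u(x_n) pairwise distinct and u'(x_i) ≠ 0 for all i, and let L_j denote the generalized Lagrange functions. Then for any indices j ≠ k with 0 ≤ j,k ≤ n, the derivative of L_j at x_k equals κ_j · w'(x_k) / (u(x_k) − u(x_j)); that is, the off-diagonal entry d_{kj} of the first-order differentiation matrix D of the generalized Lagrange functions is d_{kj} = κ_j w'(x_k)/(u_k − u_j). -/
open Finset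

/-- `glW u x t = ∏ i, (u t − u (x i))`. -/
noncomputable def glW (u : ℝ → ℝ) {n : ℕ} (x : Fin (n + 1) → ℝ) : ℝ → ℝ :=
  fun t => ∏ i, (u t - u (x i))

/-- Generalized Lagrange function `L_j(t) = κ_j ∏_{i ≠ j} (u t − u (x i))`,
with `κ_j = u'(x_j) / w'(x_j)`. -/
noncomputable def glL (u : ℝ → ℝ) {n : ℕ} (x : Fin (n + 1) → ℝ) (j : Fin (n + 1)) : ℝ → ℝ :=
  fun t => (deriv u (x j) / deriv (glW u x) (x j)) *
    ∏ i ∈ Finset.univ.erase j, (u t - u (x i))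

/-! Write `w = (u - u_j) · P_j` with `P_j = ∏_{i ≠ j} (u - u_i)`, so that `L_j = κ_j P_j`.
At a node `x_k ≠ x_j` the factor `P_j` vanishes, so the product rule gives
`w'(x_k) = (u_k - u_j) P_j'(x_k)`, while `L_j'(x_k) = κ_j P_j'(x_k)`; dividing by `u_k - u_j ≠ 0`
gives the formula. -/

theorem deriv_fun_mul_of_eq_zero_right {𝕜 : Type*} [NontriviallyNormedField 𝕜] {f g : 𝕜 → 𝕜}
    {y : 𝕜} (hf : DifferentiableAt 𝕜 f y) (hg : DifferentiableAt 𝕜 g y) (hgy : g y = 0) :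
    deriv (fun t => f t * g t) y = f y * deriv g y := by
  rw [deriv_fun_mul hf hg, hgy, mul_zero, zero_add]

noncomputable def glP (u : ℝ → ℝ) {n : ℕ} (x : Fin (n + 1) → ℝ) (j : Fin (n + 1)) : ℝ → ℝ :=
  fun t => ∏ i ∈ univ.erase j, (u t - u (x i))

section

variable {u : ℝ → ℝ} {n : ℕ} {x : Fin (n + 1) → ℝ}

theorem glW_eq_mul_glP (j : Fin (n + 1)) :
    glW u x = fun t => (u t - u (x j)) * glP u x j t := by
  funext t
  exact (mul_prod_erase univ _ (mem_univ j)).symm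

theorem differentiableAt_glP {t : ℝ} (hu : DifferentiableAt ℝ u t) (j : Fin (n + 1)) :
    DifferentiableAt ℝ (glP u x j) t :=
  DifferentiableAt.fun_finsetProd fun _ _ => hu.sub_const _

theorem glP_apply_node_eq_zero {j k : Fin (n + 1)} (hjk : j ≠ k) : glP u x j (x k) = 0 :=
  prod_eq_zero (mem_erase.mpr ⟨hjk.symm, mem_univ k⟩) (sub_self _)

theorem deriv_glW_at_node {j k : Fin (n + 1)} (hu : DifferentiableAt ℝ u (x k)) (hjk : j ≠ k) :
    deriv (glW u x) (x k) = (u (x k) - u (x j)) * deriv (glP u x j) (x k) := by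
  rw [glW_eq_mul_glP j]
  exact deriv_fun_mul_of_eq_zero_right (hu.sub_const _) (differentiableAt_glP hu j)
    (glP_apply_node_eq_zero hjk)

theorem deriv_glL {t : ℝ} (hu : DifferentiableAt ℝ u t) (j : Fin (n + 1)) :
    deriv (glL u x j) t = (deriv u (x j) / deriv (glW u x) (x j)) * deriv (glP u x j) t :=
  deriv_const_mul _ (differentiableAt_glP hu j)

end

theorem gl_deriv_offdiag_general (n : ℕ) (u : ℝ → ℝ) (x : Fin (n + 1) → ℝ)
    (hu : Differentiable ℝ u)
    (hux : Function.Injective (u ∘ x))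
    (j k : Fin (n + 1)) (hjk : j ≠ k) :
    deriv (glL u x j) (x k) =
      (deriv u (x j) / deriv (glW u x) (x j)) * deriv (glW u x) (x k) /
        (u (x k) - u (x j)) := by
  have hne : u (x k) - u (x j) ≠ 0 := sub_ne_zero.mpr fun h => hjk (hux h).symm
  rw [deriv_glL (hu _), deriv_glW_at_node (hu _) hjk, mul_div_assoc, mul_div_cancel_left₀ _ hne]

theorem gl_deriv_offdiag (n : ℕ) (u : ℝ → ℝ) (x : Fin (n + 1) → ℝ)
    (hu : Differentiable ℝ u)
    (hx : Function.Injective x)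
    (hux : Function.Injective (u ∘ x))
    (hu' : ∀ i, deriv u (x i) ≠ 0)
    (j k : Fin (n + 1)) (hjk : j ≠ k) :
    deriv (glL u x j) (x k) =
      (deriv u (x j) / deriv (glW u x) (x j)) * deriv (glW u x) (x k) /
        (u (x k) - u (x j)) :=
  gl_deriv_offdiag_general n u x hu hux j k hjk
end

section
/- Let u : ℝ → ℝ be twice differentiable, let x_0,…,x_n be distinct real points with u(x_0),…,u(x_n) pairwise distinct and u'(x_i) ≠ 0 for all i, and let L_j denote the generalized Lagrange functions. Then for every index j with 0 ≤ j ≤ n, the derivative of L_j at x_j equals κ_j · (u'(x_j) w''(x_j) − u''(x_j) w'(x_j)) / (2 u'(x_j)²); that is, the diagonal entry of the first-order differentiation matrix D is d_{jj} = κ_j (u'_j w''(x_j) − u''_j w'(x_j)) / (2 (u'_j)²). -/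
open Finset

/-!
Both `w` and `L_j` are polynomials in `u`: with `P = ∏_{i ≠ j} (X - u_i)` one has
`w = (X - u_j) P ∘ u` and `L_j = κ_j P ∘ u`. The chain rule gives
`L_j'(x_j) = κ_j u'_j P'(u_j)`, `w'(x_j) = u'_j P(u_j)` and
`w''(x_j) = u''_j P(u_j) + 2 (u'_j)² P'(u_j)`, and eliminating `P(u_j)` leaves the formula.
-/

open Polynomial

section PolynomialComp

variable {𝕜 : Type*} [NontriviallyNormedField 𝕜] {u : 𝕜 → 𝕜}

theorem hasDerivAt_polynomial_eval_comp (p : 𝕜[X]) {t : 𝕜} (hu : DifferentiableAt 𝕜 u t) :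
    HasDerivAt (fun s => p.eval (u s)) (deriv u t * p.derivative.eval (u t)) t := by
  rw [mul_comm]
  exact (p.hasDerivAt (u t)).comp t hu.hasDerivAt

theorem deriv_polynomial_eval_comp (p : 𝕜[X]) (hu : Differentiable 𝕜 u) :
    deriv (fun s => p.eval (u s)) = fun t => deriv u t * p.derivative.eval (u t) :=
  funext fun t => (hasDerivAt_polynomial_eval_comp p (hu t)).deriv

theorem deriv_deriv_polynomial_eval_comp (p : 𝕜[X]) (hu : Differentiable 𝕜 u) {t : 𝕜}
    (hu2 : DifferentiableAt 𝕜 (deriv u) t) :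
    deriv (deriv fun s => p.eval (u s)) t =
      deriv (deriv u) t * p.derivative.eval (u t) +
        deriv u t ^ 2 * p.derivative.derivative.eval (u t) := by
  rw [deriv_polynomial_eval_comp p hu]
  refine (hu2.hasDerivAt.mul (hasDerivAt_polynomial_eval_comp p.derivative (hu t))).deriv.trans ?_
  ring

end PolynomialComp

theorem Polynomial.eval_derivative_X_sub_C_mul {R : Type*} [CommRing R] (a : R) (p : R[X]) :
    ((X - C a) * p).derivative.eval a = p.eval a := by
  simp [derivative_mul]

theorem Polynomial.eval_derivative_derivative_X_sub_C_mul {R : Type*} [CommRing R] (a : R)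
    (p : R[X]) :
    ((X - C a) * p).derivative.derivative.eval a = 2 * p.derivative.eval a := by
  simp [derivative_mul, two_mul]

section GeneralizedLagrange

variable (u : ℝ → ℝ) {n : ℕ} (x : Fin (n + 1) → ℝ) (j : Fin (n + 1))

theorem glW_eq_eval_comp :
    glW u x = fun t => (∏ i, (X - C (u (x i)))).eval (u t) := by
  funext t
  simp [glW, eval_prod]

theorem glL_eq_eval_comp :
    glL u x j = fun t => (deriv u (x j) / deriv (glW u x) (x j)) *
      (∏ i ∈ univ.erase j, (X - C (u (x i)))).eval (u t) := by
  funext t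
  simp [glL, eval_prod]

theorem glW_eq_eval_comp_X_sub_C_mul :
    glW u x = fun t => ((X - C (u (x j))) * ∏ i ∈ univ.erase j, (X - C (u (x i)))).eval (u t) := by
  rw [mul_prod_erase univ (fun i => X - C (u (x i))) (mem_univ j)]
  exact glW_eq_eval_comp u x

end GeneralizedLagrange

theorem gl_deriv_diag_general (n : ℕ) (u : ℝ → ℝ) (x : Fin (n + 1) → ℝ)
    (hu : Differentiable ℝ u)
    (hu2 : Differentiable ℝ (deriv u))
    (j : Fin (n + 1)) :
    deriv (glL u x j) (x j) =
      (deriv u (x j) / deriv (glW u x) (x j)) *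
        (deriv u (x j) * deriv (deriv (glW u x)) (x j) -
          deriv (deriv u) (x j) * deriv (glW u x) (x j)) /
        (2 * (deriv u (x j)) ^ 2) := by
  set P : ℝ[X] := ∏ i ∈ univ.erase j, (X - C (u (x i)))
  have hL' : deriv (glL u x j) (x j) =
      (deriv u (x j) / deriv (glW u x) (x j)) * (deriv u (x j) * P.derivative.eval (u (x j))) := by
    rw [glL_eq_eval_comp]
    exact ((hasDerivAt_polynomial_eval_comp P (hu (x j))).const_mul _).deriv
  have hW' : deriv (glW u x) (x j) = deriv u (x j) * P.eval (u (x j)) := by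
    rw [glW_eq_eval_comp_X_sub_C_mul u x j, deriv_polynomial_eval_comp _ hu]
    beta_reduce
    rw [eval_derivative_X_sub_C_mul]
  have hW'' : deriv (deriv (glW u x)) (x j) =
      deriv (deriv u) (x j) * P.eval (u (x j)) +
        deriv u (x j) ^ 2 * (2 * P.derivative.eval (u (x j))) := by
    rw [glW_eq_eval_comp_X_sub_C_mul u x j, deriv_deriv_polynomial_eval_comp _ hu (hu2 _),
      eval_derivative_X_sub_C_mul, eval_derivative_derivative_X_sub_C_mul]
  rw [hL', mul_div_assoc]
  congr 1
  rw [hW', hW'']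
  rcases eq_or_ne (deriv u (x j)) 0 with h | h
  · simp [h]
  · field_simp
    ring

theorem gl_deriv_diag (n : ℕ) (u : ℝ → ℝ) (x : Fin (n + 1) → ℝ)
    (hu : Differentiable ℝ u)
    (hu2 : Differentiable ℝ (deriv u))
    (hx : Function.Injective x)
    (hux : Function.Injective (u ∘ x))
    (hu' : ∀ i, deriv u (x i) ≠ 0)
    (j : Fin (n + 1)) :
    deriv (glL u x j) (x j) =
      (deriv u (x j) / deriv (glW u x) (x j)) *
        (deriv u (x j) * deriv (deriv (glW u x)) (x j) -
          deriv (deriv u) (x j) * deriv (glW u x) (x j)) /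
        (2 * (deriv u (x j)) ^ 2) :=
  gl_deriv_diag_general n u x hu hu2 j
end

section
/- Let u : ℝ → ℝ be twice differentiable, let x_0,…,x_n be distinct real points with u(x_0),…,u(x_n) pairwise distinct and u'(x_i) ≠ 0 for all i, and let L_j denote the generalized Lagrange functions. Let D be the matrix with entries d_{kj} = L_j'(x_k) and let D^{(2)} be the matrix with entries d^{(2)}_{kj} = L_j''(x_k). Then D^{(2)} = (Q^{(1)} + Q D) Q^{−1} D, where Q = Diag(u'(x_0),…,u'(x_n)) and Q^{(1)} = Diag(u''(x_0),…,u''(x_n)); equivalently, entrywise, L_j''(x_k) = (u''(x_k)/u'(x_k)) · L_j'(x_k) + u'(x_k) · ∑_{l=0}^{n} L_l'(x_k) L_j'(x_l) / u'(x_l) for all 0 ≤ j,k ≤ n. -/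
open Finset
open Polynomial

theorem gl_second_deriv_matrix (n : ℕ) (u : ℝ → ℝ) (x : Fin (n + 1) → ℝ)
    (hu : Differentiable ℝ u)
    (hu2 : Differentiable ℝ (deriv u))
    (hx : Function.Injective x)
    (hux : Function.Injective (u ∘ x))
    (hu' : ∀ i, deriv u (x i) ≠ 0)
    (j k : Fin (n + 1)) :
    deriv (deriv (glL u x j)) (x k) =
      (deriv (deriv u) (x k) / deriv u (x k)) * deriv (glL u x j) (x k) +
        deriv u (x k) *
          ∑ l, deriv (glL u x l) (x k) * deriv (glL u x j) (x l) / deriv u (x l) := by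
  classical
  set v : Fin (n + 1) → ℝ := u ∘ x with hv
  have hvinj : Set.InjOn v (Finset.univ : Finset (Fin (n+1))) := fun a _ b _ h => hux h
  set p : Fin (n + 1) → ℝ[X] := fun j => Lagrange.basis Finset.univ v j with hp
  -- derivative of glW at x j
  have hWd : ∀ j : Fin (n+1), deriv (fun t => ∏ i, (u t - u (x i))) (x j)
      = (∏ i ∈ Finset.univ.erase j, (v j - v i)) * deriv u (x j) := by
    intro j
    have h1 : HasDerivAt (fun t => (Lagrange.nodal Finset.univ v).eval (u t))
        ((Lagrange.nodal Finset.univ v).derivative.eval (u (x j)) * deriv u (x j)) (x j) :=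
      ((Lagrange.nodal Finset.univ v).hasDerivAt (u (x j))).comp _ (hu (x j)).hasDerivAt
    have h2 : (fun t => (Lagrange.nodal Finset.univ v).eval (u t))
        = fun t => ∏ i, (u t - u (x i)) := by
      funext t; simp [Lagrange.eval_nodal, hv]
    rw [h2] at h1
    rw [h1.deriv]
    congr 1
    show eval (v j) (derivative (Lagrange.nodal Finset.univ v)) = _
    rw [Lagrange.eval_nodal_derivative_eval_node_eq (mem_univ j), Lagrange.eval_nodal]
  have hprodne : ∀ j : Fin (n+1), (∏ i ∈ Finset.univ.erase j, (v j - v i)) ≠ 0 := by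
    intro j
    exact Finset.prod_ne_zero_iff.2 fun i hi =>
      sub_ne_zero.2 fun h => (mem_erase.1 hi).1 (hux h).symm
  -- glL as polynomial composition
  have hglL : ∀ j : Fin (n+1), glL u x j = fun t => (p j).eval (u t) := by
    intro j
    funext t
    have hc : deriv u (x j) / deriv (glW u x) (x j)
        = (∏ i ∈ Finset.univ.erase j, (v j - v i))⁻¹ := by
      show deriv u (x j) / deriv (fun t => ∏ i, (u t - u (x i))) (x j) = _
      rw [hWd j, mul_comm, div_mul_eq_div_div, div_self (hu' j), one_div]
    show deriv u (x j) / deriv (glW u x) (x j) * ∏ i ∈ Finset.univ.erase j, (u t - u (x i)) = _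
    rw [hc, hp]
    simp only [Lagrange.basis, eval_prod, Lagrange.basisDivisor, eval_mul, eval_C, eval_sub,
      eval_X]
    rw [Finset.prod_mul_distrib, ← Finset.prod_inv_distrib]
    rfl
  -- first derivative
  have hD1 : ∀ (j : Fin (n+1)) (t : ℝ),
      HasDerivAt (glL u x j) ((p j).derivative.eval (u t) * deriv u t) t := by
    intro j t
    rw [hglL j]
    exact ((p j).hasDerivAt (u t)).comp _ (hu t).hasDerivAt
  have hD1' : ∀ (j : Fin (n+1)) (t : ℝ),
      deriv (glL u x j) t = (p j).derivative.eval (u t) * deriv u t := fun j t => (hD1 j t).deriv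
  -- second derivative
  have hD2 : ∀ (j : Fin (n+1)) (t : ℝ),
      deriv (deriv (glL u x j)) t
        = (p j).derivative.derivative.eval (u t) * deriv u t * deriv u t
          + (p j).derivative.eval (u t) * deriv (deriv u) t := by
    intro j t
    have h1 : HasDerivAt (fun s => (p j).derivative.eval (u s) * deriv u s)
        ((p j).derivative.derivative.eval (u t) * deriv u t * deriv u t
          + (p j).derivative.eval (u t) * deriv (deriv u) t) t :=
      (((p j).derivative.hasDerivAt (u t)).comp _ (hu t).hasDerivAt).mul (hu2 t).hasDerivAt
    have h2 : deriv (glL u x j) = fun s => (p j).derivative.eval (u s) * deriv u s :=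
      funext (hD1' j)
    rw [h2, h1.deriv]
  -- interpolation identity
  have hinterp : ∀ j : Fin (n+1), (p j).derivative
      = ∑ l, C ((p j).derivative.eval (v l)) * p l := by
    intro j
    have hdeg : ((p j).derivative).degree < (#(Finset.univ : Finset (Fin (n+1))) : WithBot ℕ) := by
      calc ((p j).derivative).degree ≤ (p j).degree := Polynomial.degree_derivative_le
        _ = ↑(#(Finset.univ : Finset (Fin (n+1))) - 1) :=
            Lagrange.degree_basis hvinj (mem_univ j)
        _ < _ := by
            rw [Nat.cast_lt]
            simp
    have := Lagrange.eq_interpolate hvinj hdeg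
    rw [Lagrange.interpolate_apply] at this
    simp only [hp] at this ⊢
    exact this
  have hkey : ∀ j l : Fin (n+1), (p j).derivative.derivative.eval (v l)
      = ∑ i, (p j).derivative.eval (v i) * (p i).derivative.eval (v l) := by
    intro j l
    conv_lhs => rw [hinterp j]
    rw [derivative_sum, eval_finset_sum]
    congr 1; funext i
    rw [derivative_C_mul, eval_mul, eval_C]
  -- final assembly
  have hvk : ∀ i : Fin (n+1), u (x i) = v i := fun _ => rfl
  rw [hD2 j (x k)]
  have hsum : ∀ l : Fin (n+1),
      deriv (glL u x l) (x k) * deriv (glL u x j) (x l) / deriv u (x l)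
        = (p l).derivative.eval (v k) * deriv u (x k) * (p j).derivative.eval (v l) := by
    intro l
    rw [hD1' l (x k), hD1' j (x l), hvk, hvk, mul_div_assoc,
      mul_div_assoc, div_self (hu' l), mul_one]
  simp_rw [hsum]
  rw [hD1' j (x k), hvk, hkey j k, Finset.sum_mul, Finset.sum_mul, Finset.mul_sum]
  have h1 : deriv (deriv u) (x k) / deriv u (x k)
      * (eval (v k) (derivative (p j)) * deriv u (x k))
      = eval (v k) (derivative (p j)) * deriv (deriv u) (x k) := by
    field_simp [hu' k]
  rw [h1]
  rw [add_comm]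
  congr 1
  apply Finset.sum_congr rfl
  intro i _
  ring
end

section
/- Let α, β > −1, n ≥ 1, let u : ℝ → ℝ be twice differentiable, and let x_0,…,x_n be distinct points such that u(x_0) = −1, u(x_1),…,u(x_n) are the n distinct roots of the Jacobi polynomial G = P_n^{α,β+1}, u(x_0),…,u(x_n) are pairwise distinct, and u'(x_i) ≠ 0 for all i. Let L_j be the generalized Lagrange functions on these nodes and D the matrix with entries d_{kj} = L_j'(x_k). Then the first diagonal entry satisfies d_{00} = − u'(x_0) · n · (α+β+n+2) / (2(β+2)). -/
/-- Jacobi polynomials `P_n^{α,β}` defined by the three-term recurrence. -/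
noncomputable def jacobiP (α β : ℝ) : ℕ → ℝ → ℝ
  | 0, _ => 1
  | 1, x => (α + β + 2) * x / 2 + (α - β) / 2
  | K + 2, x =>
      ((2 * ((K : ℝ) + 1) + α + β + 1) * (2 * ((K : ℝ) + 1) + α + β + 2) /
            (2 * (((K : ℝ) + 1) + 1) * (((K : ℝ) + 1) + α + β + 1)) * x -
          (β ^ 2 - α ^ 2) * (2 * ((K : ℝ) + 1) + α + β + 1) /
            (2 * (((K : ℝ) + 1) + 1) * (((K : ℝ) + 1) + α + β + 1) *
              (2 * ((K : ℝ) + 1) + α + β))) *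
        jacobiP α β (K + 1) x -
      (((K : ℝ) + 1) + α) * (((K : ℝ) + 1) + β) * (2 * ((K : ℝ) + 1) + α + β + 2) /
            ((((K : ℝ) + 1) + 1) * (((K : ℝ) + 1) + α + β + 1) * (2 * ((K : ℝ) + 1) + α + β)) *
        jacobiP α β K x

open Finset

/-! Since `κ₀` cancels `∏_{i ≠ 0} (u₀ - uᵢ)`, `L₀'(x₀) = u'(x₀) ∑_{i ≠ 0} 1 / (u₀ - uᵢ)`. With
`u₀ = -1` and the other `uᵢ` the `n` roots of `G = P_n^{α,β+1}`, that sum is the logarithmic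
derivative `G'(-1) / G(-1)`. Running the three-term recurrence at `-1` gives
`P_k(-1) = (-1)^k (β+1)_k / k!` and `P_k'(-1) = -(k (k + α + β + 1) / (2 (β + 1))) P_k(-1)`. -/

open Polynomial

namespace Polynomial

variable {K : Type*} [Field K]

theorem roots_eq_of_natDegree_le_card {p : K[X]} {s : Finset K} (hp : p ≠ 0)
    (hdeg : p.natDegree ≤ #s) (hs : ∀ a ∈ s, p.IsRoot a) : p.roots = s.val := by
  have hle : s.val ≤ p.roots :=
    (Multiset.le_iff_subset s.nodup).2 fun a ha => (mem_roots hp).2 (hs a ha)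
  exact (Multiset.eq_of_le_of_card_le hle ((card_roots' p).trans hdeg)).symm

theorem eval_derivative_div_eval_eq_sum_inv {p : K[X]} {s : Finset K} {t : K}
    (hdeg : p.natDegree ≤ #s) (hs : ∀ a ∈ s, p.IsRoot a) (ht : p.eval t ≠ 0) :
    p.derivative.eval t / p.eval t = ∑ a ∈ s, (t - a)⁻¹ := by
  have hp : p ≠ 0 := by rintro rfl; simp at ht
  have hroots := roots_eq_of_natDegree_le_card hp hdeg hs
  have hsplits : p.Splits :=
    splits_iff_card_roots.2 (le_antisymm (card_roots' p) (by rw [hroots]; exact hdeg))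
  rw [hsplits.eval_derivative_div_eval_of_ne_zero ht, hroots]
  simp only [one_div]
  rfl

end Polynomial

theorem Finset.sum_prod_erase_eq_prod_mul_sum_inv {ι K : Type*} [DecidableEq ι] [Field K]
    (s : Finset ι) (f : ι → K) (hf : ∀ a ∈ s, f a ≠ 0) :
    ∑ a ∈ s, ∏ b ∈ s.erase a, f b = (∏ b ∈ s, f b) * ∑ a ∈ s, (f a)⁻¹ := by
  rw [Finset.mul_sum]
  refine Finset.sum_congr rfl fun a ha => ?_
  rw [← Finset.prod_erase_mul s f ha, mul_inv_cancel_right₀ (hf a ha)]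

section GeneralizedLagrange

variable {u : ℝ → ℝ} {y : ℝ}

theorem hasDerivAt_prod_sub_comp {ι : Type*} [DecidableEq ι] (s : Finset ι) (x : ι → ℝ)
    (hu : DifferentiableAt ℝ u y) :
    HasDerivAt (fun t => ∏ i ∈ s, (u t - u (x i)))
      (deriv u y * ∑ i ∈ s, ∏ k ∈ s.erase i, (u y - u (x k))) y := by
  have h := HasDerivAt.fun_finsetProd (u := s) (x := y)
    fun i _ => hu.hasDerivAt.sub_const (u (x i))
  simpa only [smul_eq_mul, ← Finset.sum_mul, mul_comm (deriv u y)] using h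

variable {n : ℕ} {x : Fin (n + 1) → ℝ} {j : Fin (n + 1)}

theorem deriv_glW_node (hu : DifferentiableAt ℝ u (x j)) :
    deriv (glW u x) (x j) = deriv u (x j) * ∏ i ∈ univ.erase j, (u (x j) - u (x i)) := by
  unfold glW
  rw [(hasDerivAt_prod_sub_comp univ x hu).deriv, sum_eq_single_of_mem j (mem_univ j)]
  intro i _ hij
  exact prod_eq_zero (mem_erase.2 ⟨Ne.symm hij, mem_univ j⟩) (sub_self _)

theorem deriv_glL_node (hu : DifferentiableAt ℝ u (x j)) (hu' : deriv u (x j) ≠ 0)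
    (hux : Function.Injective (u ∘ x)) :
    deriv (glL u x j) (x j) = deriv u (x j) * ∑ i ∈ univ.erase j, (u (x j) - u (x i))⁻¹ := by
  have hne : ∀ i ∈ univ.erase j, u (x j) - u (x i) ≠ 0 := fun i hi =>
    sub_ne_zero.2 fun h => (mem_erase.1 hi).1 (hux h).symm
  have hP : ∏ i ∈ univ.erase j, (u (x j) - u (x i)) ≠ 0 := prod_ne_zero_iff.2 hne
  unfold glL
  rw [((hasDerivAt_prod_sub_comp _ x hu).const_mul _).deriv, deriv_glW_node hu,
    sum_prod_erase_eq_prod_mul_sum_inv _ _ hne]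
  field_simp

end GeneralizedLagrange

theorem ascPochhammer_eval_div_factorial_succ (b : ℝ) (k : ℕ) :
    (ascPochhammer ℝ (k + 1)).eval b / (k + 1).factorial =
      (ascPochhammer ℝ k).eval b / k.factorial * ((b + k) / (k + 1)) := by
  rw [ascPochhammer_succ_eval, Nat.factorial_succ]
  push_cast
  field_simp

noncomputable def jacobiA (α β k : ℝ) : ℝ :=
  (2 * k + α + β + 1) * (2 * k + α + β + 2) / (2 * (k + 1) * (k + α + β + 1))

noncomputable def jacobiB (α β k : ℝ) : ℝ :=
  (β ^ 2 - α ^ 2) * (2 * k + α + β + 1) / (2 * (k + 1) * (k + α + β + 1) * (2 * k + α + β))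

noncomputable def jacobiC (α β k : ℝ) : ℝ :=
  (k + α) * (k + β) * (2 * k + α + β + 2) / ((k + 1) * (k + α + β + 1) * (2 * k + α + β))

section JacobiCoefficients

variable {α β k : ℝ}

/- The three-term recurrences for `P` and `P'` at `-1`, divided by `P_{k-1}(-1)`, after substituting
`P_k(-1) = -((β + k) / k) P_{k-1}(-1)` and `P_m'(-1) = -(m (m + α + β + 1) / (2 (β + 1))) P_m(-1)`. -/

theorem jacobiCoeff_identity_neg_one (hαβ : -2 < α + β) (hk : 1 ≤ k) :
    (jacobiA α β k + jacobiB α β k) * ((β + k) / k) - jacobiC α β k =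
      (β + k) / k * ((β + k + 1) / (k + 1)) := by
  have h1 : 2 * k + α + β ≠ 0 := by linarith
  have h2 : k + α + β + 1 ≠ 0 := by linarith
  have h3 : k + 1 ≠ 0 := by linarith
  have h4 : k ≠ 0 := by linarith
  unfold jacobiA jacobiB jacobiC
  field_simp
  ring

theorem jacobiCoeff_identity_derivative_neg_one (hαβ : -2 < α + β) (hβ : β + 1 ≠ 0) (hk : 1 ≤ k) :
    -(jacobiA α β k * ((β + k) / k)) -
        (jacobiA α β k + jacobiB α β k) * (k * (k + α + β + 1) / (2 * (β + 1)) * ((β + k) / k)) +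
        jacobiC α β k * ((k - 1) * (k + α + β) / (2 * (β + 1))) =
      -((k + 1) * (k + α + β + 2) / (2 * (β + 1)) * ((β + k) / k * ((β + k + 1) / (k + 1)))) := by
  have h1 : 2 * k + α + β ≠ 0 := by linarith
  have h2 : k + α + β + 1 ≠ 0 := by linarith
  have h3 : k + 1 ≠ 0 := by linarith
  have h4 : k ≠ 0 := by linarith
  unfold jacobiA jacobiB jacobiC
  field_simp
  ring

end JacobiCoefficients

noncomputable def jacobiPoly (α β : ℝ) : ℕ → ℝ[X]
  | 0 => 1
  | 1 => C ((α + β + 2) / 2) * X + C ((α - β) / 2)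
  | K + 2 =>
      (C (jacobiA α β ((K : ℝ) + 1)) * X - C (jacobiB α β ((K : ℝ) + 1))) * jacobiPoly α β (K + 1) -
        C (jacobiC α β ((K : ℝ) + 1)) * jacobiPoly α β K

namespace jacobiPoly

variable {α β : ℝ}

theorem eval_eq_jacobiP (α β : ℝ) : ∀ (k : ℕ) (t : ℝ), (jacobiPoly α β k).eval t = jacobiP α β k t
  | 0, t => by simp [jacobiPoly, jacobiP]
  | 1, t => by simp [jacobiPoly, jacobiP]; ring
  | K + 2, t => by
    simp only [jacobiPoly, jacobiP, eval_sub, eval_mul, eval_C, eval_X, jacobiA, jacobiB, jacobiC,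
      eval_eq_jacobiP α β (K + 1) t, eval_eq_jacobiP α β K t]

theorem natDegree_le (α β : ℝ) : ∀ k, (jacobiPoly α β k).natDegree ≤ k
  | 0 => by simp [jacobiPoly]
  | 1 => by
    simp only [jacobiPoly]
    compute_degree
  | K + 2 => by
    have h1 := natDegree_le α β (K + 1)
    have h0 := natDegree_le α β K
    simp only [jacobiPoly]
    refine (natDegree_sub_le _ _).trans (max_le ?_ ?_)
    · refine natDegree_mul_le.trans ?_
      have : (C (jacobiA α β ((K : ℝ) + 1)) * X - C (jacobiB α β ((K : ℝ) + 1))).natDegree ≤ 1 := by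
        compute_degree
      omega
    · exact natDegree_C_mul_le _ _ |>.trans (by omega)

theorem eval_neg_one_and_derivative (hαβ : -2 < α + β) (hβ : β + 1 ≠ 0) : ∀ k : ℕ,
    (jacobiPoly α β k).eval (-1) = (-1) ^ k * ((ascPochhammer ℝ k).eval (β + 1) / k.factorial) ∧
    (derivative (jacobiPoly α β k)).eval (-1) =
      -(k * (k + α + β + 1) / (2 * (β + 1))) * (jacobiPoly α β k).eval (-1)
  | 0 => by simp [jacobiPoly]
  | 1 => by
    simp only [jacobiPoly, eval_add, eval_mul, eval_C, eval_X, pow_one, ascPochhammer_one,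
      Nat.factorial_one, Nat.cast_one, div_one, derivative_add, derivative_mul, derivative_C,
      derivative_X, zero_mul, zero_add, add_zero, mul_one]
    constructor
    · ring
    · field_simp; ring
  | K + 2 => by
    obtain ⟨e1, d1⟩ := eval_neg_one_and_derivative hαβ hβ (K + 1)
    obtain ⟨e0, d0⟩ := eval_neg_one_and_derivative hαβ hβ K
    have hK : (1 : ℝ) ≤ (K : ℝ) + 1 := by have := K.cast_nonneg (α := ℝ); linarith
    have hvalue := jacobiCoeff_identity_neg_one hαβ hK
    have hderiv := jacobiCoeff_identity_derivative_neg_one hαβ hβ hK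
    generalize hv : (-1 : ℝ) ^ K * ((ascPochhammer ℝ K).eval (β + 1) / K.factorial) = v at e0
    have hv1 : (jacobiPoly α β (K + 1)).eval (-1) = -((β + ((K : ℝ) + 1)) / ((K : ℝ) + 1)) * v := by
      rw [e1, ascPochhammer_eval_div_factorial_succ, pow_succ, ← hv]
      ring
    have hv2 : (jacobiPoly α β (K + 2)).eval (-1) =
        (β + ((K : ℝ) + 1)) / ((K : ℝ) + 1) * ((β + ((K : ℝ) + 1) + 1) / ((K : ℝ) + 1 + 1)) * v := by
      simp only [jacobiPoly, eval_sub, eval_mul, eval_C, eval_X, hv1, e0]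
      linear_combination v * hvalue
    constructor
    · rw [hv2, ascPochhammer_eval_div_factorial_succ, ascPochhammer_eval_div_factorial_succ, ← hv]
      push_cast
      ring
    · rw [hv2]
      simp only [jacobiPoly, derivative_sub, derivative_mul, derivative_C, derivative_X, zero_mul,
        mul_one, zero_add, sub_zero, eval_sub, eval_add, eval_mul, eval_C, eval_X, d1, d0, hv1, e0]
      push_cast
      linear_combination v * hderiv

theorem eval_neg_one_ne_zero (hαβ : -2 < α + β) (hβ : -1 < β) (k : ℕ) :
    (jacobiPoly α β k).eval (-1) ≠ 0 := by
  rw [(eval_neg_one_and_derivative hαβ (by linarith) k).1]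
  have hpos := ascPochhammer_pos k (β + 1) (by linarith)
  have hfac : (0 : ℝ) < k.factorial := by exact_mod_cast k.factorial_pos
  exact mul_ne_zero (pow_ne_zero k (by norm_num)) (div_pos hpos hfac).ne'

theorem sum_inv_neg_one_sub_roots (hαβ : -2 < α + β) (hβ : -1 < β) {k : ℕ} {s : Finset ℝ}
    (hs : #s = k) (hroots : ∀ a ∈ s, jacobiP α β k a = 0) :
    ∑ a ∈ s, (-1 - a)⁻¹ = -(k * (k + α + β + 1) / (2 * (β + 1))) := by
  have hne := eval_neg_one_ne_zero hαβ hβ k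
  rw [← eval_derivative_div_eval_eq_sum_inv ((natDegree_le α β k).trans hs.ge)
    (fun a ha => by rw [IsRoot, eval_eq_jacobiP]; exact hroots a ha) hne,
    (eval_neg_one_and_derivative hαβ (by linarith) k).2, mul_div_cancel_right₀ _ hne]

end jacobiPoly

theorem gl_jacobi_radau_first_diag_general (α β : ℝ) (hα : -1 < α) (hβ : -1 < β)
    (n : ℕ) (u : ℝ → ℝ) (x : Fin (n + 1) → ℝ)
    (hu : Differentiable ℝ u)
    (hux : Function.Injective (u ∘ x))
    (hu' : ∀ i, deriv u (x i) ≠ 0)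
    (hfirst : u (x 0) = -1)
    (hroots : ∀ i : Fin (n + 1), 0 < (i : ℕ) → jacobiP α (β + 1) n (u (x i)) = 0) :
    deriv (glL u x 0) (x 0) =
      -(deriv u (x 0)) * (n : ℝ) * (α + β + (n : ℝ) + 2) / (2 * (β + 2)) := by
  set s := (univ.erase 0).image (u ∘ x)
  have hcard : #s = n := by
    rw [card_image_of_injective _ hux, card_erase_of_mem (mem_univ 0), card_univ, Fintype.card_fin]
    rfl
  have hs : ∀ a ∈ s, jacobiP α (β + 1) n a = 0 := by
    simp only [s, mem_image, mem_erase]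
    rintro _ ⟨i, ⟨hi, -⟩, rfl⟩
    exact hroots i (Fin.pos_iff_ne_zero.2 hi)
  have hsum : ∑ i ∈ univ.erase 0, (u (x 0) - u (x i))⁻¹ = ∑ a ∈ s, (-1 - a)⁻¹ := by
    rw [sum_image fun _ _ _ _ h => hux h, hfirst]
    rfl
  rw [deriv_glL_node (hu _) (hu' 0) hux, hsum,
    jacobiPoly.sum_inv_neg_one_sub_roots (by linarith) (by linarith) hcard hs]
  ring

theorem gl_jacobi_radau_first_diag (α β : ℝ) (hα : -1 < α) (hβ : -1 < β)
    (n : ℕ) (hn : 1 ≤ n) (u : ℝ → ℝ) (x : Fin (n + 1) → ℝ)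
    (hu : Differentiable ℝ u)
    (hu2 : Differentiable ℝ (deriv u))
    (hx : Function.Injective x)
    (hux : Function.Injective (u ∘ x))
    (hu' : ∀ i, deriv u (x i) ≠ 0)
    (hfirst : u (x 0) = -1)
    (hroots : ∀ i : Fin (n + 1), 0 < (i : ℕ) → jacobiP α (β + 1) n (u (x i)) = 0) :
    deriv (glL u x 0) (x 0) =
      -(deriv u (x 0)) * (n : ℝ) * (α + β + (n : ℝ) + 2) / (2 * (β + 2)) :=
  gl_jacobi_radau_first_diag_general α β hα hβ n u x hu hux hu' hfirst hroots
end
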